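/- arXiv:2509.02049 — 5 statements merged into one kernel-verified Lean document; each statement's English description precedes it below -/
import Mathlib

section
/- The crease c is a unit-speed planar curve with explicit Frenet apparatus: for all s ∈ [0,L] one has ‖c′(s)‖ = 1; for all s ∈ (0,L) the curvature κ(s) := ‖c″(s)‖ equals −√2·ζ″(s)/σ(s) and is strictly positive; the principal normal N(s) := c″(s)/κ(s) equals (2ζ′(s), −σ(s), −σ(s))/√2; and the binormal B(s) := c′(s) × N(s) equals the constant vector (0, 1, −1)/√2 (so c has vanishing torsion and lies in a plane). -/
open Real Set

noncomputable section

/-- Euclidean 3-space. -/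
abbrev E3 : Type := EuclideanSpace ℝ (Fin 3)

/-- The vector `(x, y, z)` in `ℝ³`. -/
def v3 (x y z : ℝ) : E3 := WithLp.toLp 2 ![x, y, z]

/-- The cross product in `ℝ³`. -/
def cross3 (u w : E3) : E3 :=
  v3 (u 1 * w 2 - u 2 * w 1) (u 2 * w 0 - u 0 * w 2) (u 0 * w 1 - u 1 * w 0)

/-- `σ(s) = √(1 − 2 ζ′(s)²)`. -/
def sig (ζ : ℝ → ℝ) (s : ℝ) : ℝ := Real.sqrt (1 - 2 * (deriv ζ s) ^ 2)

/-- The crease `c(s) = (∫₀ˢ σ(w) dw, ζ(s), ζ(s))`. -/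
def crease (ζ : ℝ → ℝ) (s : ℝ) : E3 :=
  v3 (∫ w in (0:ℝ)..s, sig ζ w) (ζ s) (ζ s)

/-- The crease pattern `γ(s) = (∫₀ˢ √(1 − ζ′(w)²) dw, ζ(s), 0)`. -/
def pattern (ζ : ℝ → ℝ) (s : ℝ) : E3 :=
  v3 (∫ w in (0:ℝ)..s, Real.sqrt (1 - (deriv ζ w) ^ 2)) (ζ s) 0

/-- The curvature `κ(s) = ‖c″(s)‖` of a space curve. -/
def curv (c : ℝ → E3) (s : ℝ) : ℝ := ‖deriv (deriv c) s‖

/-- The principal normal `N(s) = c″(s)/κ(s)` of a space curve. -/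
def nvec (c : ℝ → E3) (s : ℝ) : E3 := (curv c s)⁻¹ • deriv (deriv c) s

/-- The binormal `B(s) = c′(s) × N(s)` of a space curve. -/
def bvec (c : ℝ → E3) (s : ℝ) : E3 := cross3 (deriv c s) (nvec c s)

@[simp] lemma v3_app0 (x y z : ℝ) : v3 x y z 0 = x := rfl
@[simp] lemma v3_app1 (x y z : ℝ) : v3 x y z 1 = y := rfl
@[simp] lemma v3_app2 (x y z : ℝ) : v3 x y z 2 = z := rfl

lemma smul_v3 (a x y z : ℝ) : a • v3 x y z = v3 (a * x) (a * y) (a * z) := by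
  ext i
  fin_cases i <;> rfl

lemma v3_eq {a b c d e f : ℝ} (h1 : a = d) (h2 : b = e) (h3 : c = f) :
    v3 a b c = v3 d e f := by rw [h1, h2, h3]

lemma cross3_v3 (a b c d e f : ℝ) :
    cross3 (v3 a b c) (v3 d e f)
      = v3 (b * f - c * e) (c * d - a * f) (a * e - b * d) := rfl

lemma hasDerivAt_v3 {f g h : ℝ → ℝ} {f' g' h' x : ℝ}
    (hf : HasDerivAt f f' x) (hg : HasDerivAt g g' x) (hh : HasDerivAt h h' x) :
    HasDerivAt (fun s => v3 (f s) (g s) (h s)) (v3 f' g' h') x := by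
  have hp : HasDerivAt (fun s => (![f s, g s, h s] : Fin 3 → ℝ)) ![f', g', h'] x := by
    rw [hasDerivAt_pi]
    intro i
    fin_cases i
    · simpa using hf
    · simpa using hg
    · simpa using hh
  exact ((EuclideanSpace.equiv (Fin 3) ℝ).symm.toContinuousLinearMap.hasFDerivAt).comp_hasDerivAt x hp

lemma norm_v3 (x y z : ℝ) : ‖v3 x y z‖ = Real.sqrt (x ^ 2 + y ^ 2 + z ^ 2) := by
  rw [EuclideanSpace.norm_eq, Fin.sum_univ_three]
  simp [Real.norm_eq_abs, sq_abs]

/-- the crease is a unit-speed planar curve with explicit Frenet apparatus. -/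
theorem crease_frenet_apparatus
    (b L : ℝ) (hb : 0 < b) (hL : 0 < L) (ζ : ℝ → ℝ) (hζ : ContDiff ℝ (⊤ : ℕ∞) ζ)
    (hζ0 : ζ 0 = 0) (hζL : ζ L = 0)
    (hslope : ∀ s ∈ Set.Icc (0:ℝ) L, 0 < 1 - 2 * (deriv ζ s) ^ 2)
    (hrange : ∀ s ∈ Set.Ioo (0:ℝ) L, 0 < ζ s ∧ ζ s < b)
    (hconc : ∀ s ∈ Set.Ioo (0:ℝ) L, deriv (deriv ζ) s < 0) :
    (∀ s ∈ Set.Icc (0:ℝ) L, ‖deriv (crease ζ) s‖ = 1) ∧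
    (∀ s ∈ Set.Ioo (0:ℝ) L,
      curv (crease ζ) s = -Real.sqrt 2 * deriv (deriv ζ) s / sig ζ s ∧
      0 < curv (crease ζ) s ∧
      nvec (crease ζ) s
        = (Real.sqrt 2)⁻¹ • v3 (2 * deriv ζ s) (-(sig ζ s)) (-(sig ζ s)) ∧
      bvec (crease ζ) s = (Real.sqrt 2)⁻¹ • v3 0 1 (-1)) := by
  have hζinf : ContDiff ℝ (⊤ : ℕ∞) ζ := hζ.of_le (by simp)
  obtain ⟨hζdiff, hζ'⟩ := contDiff_infty_iff_deriv.mp hζinf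
  have hζ'diff : Differentiable ℝ (deriv ζ) := hζ'.differentiable (by simp)
  have hζ'cont : Continuous (deriv ζ) := hζ'diff.continuous
  have hsig_cont : Continuous (sig ζ) :=
    (continuous_const.sub (continuous_const.mul (hζ'cont.pow 2))).sqrt
  have hc' : ∀ s : ℝ, HasDerivAt (crease ζ) (v3 (sig ζ s) (deriv ζ s) (deriv ζ s)) s := by
    intro s
    apply hasDerivAt_v3
    · exact intervalIntegral.integral_hasDerivAt_right
        (hsig_cont.intervalIntegrable _ _)
        (hsig_cont.stronglyMeasurable.stronglyMeasurableAtFilter)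
        hsig_cont.continuousAt
    · exact (hζdiff s).hasDerivAt
    · exact (hζdiff s).hasDerivAt
  have hderiv_c : deriv (crease ζ) = fun s => v3 (sig ζ s) (deriv ζ s) (deriv ζ s) :=
    funext fun s => (hc' s).deriv
  constructor
  · intro s hs
    have hpos := hslope s hs
    have hσsq : sig ζ s ^ 2 = 1 - 2 * (deriv ζ s) ^ 2 := Real.sq_sqrt hpos.le
    rw [hderiv_c]
    rw [norm_v3, hσsq]
    rw [show 1 - 2 * deriv ζ s ^ 2 + deriv ζ s ^ 2 + deriv ζ s ^ 2 = 1 by ring]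
    exact Real.sqrt_one
  · intro s hs
    have hsI : s ∈ Set.Icc (0:ℝ) L := Ioo_subset_Icc_self hs
    have hpos := hslope s hsI
    have hσpos : 0 < sig ζ s := Real.sqrt_pos.mpr hpos
    have hσsq : sig ζ s ^ 2 = 1 - 2 * (deriv ζ s) ^ 2 := Real.sq_sqrt hpos.le
    have hr : deriv (deriv ζ) s < 0 := hconc s hs
    set q := deriv ζ s with hq
    set r := deriv (deriv ζ) s with hrr
    set σ := sig ζ s with hσ
    have hσne : σ ≠ 0 := hσpos.ne'
    have hrne : r ≠ 0 := hr.ne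
    have hd2 : HasDerivAt (deriv ζ) r s := (hζ'diff s).hasDerivAt
    have hσ' : HasDerivAt (sig ζ) (-2 * q * r / σ) s := by
      have hu : HasDerivAt (fun t => 1 - 2 * (deriv ζ t) ^ 2) (-(2 * (2 * q ^ 1 * r))) s :=
        (((hd2.pow 2).const_mul 2).const_sub 1)
      have hcomp := (Real.hasDerivAt_sqrt hpos.ne').comp s hu
      refine hcomp.congr_deriv ?_
      rw [← hσsq] at hpos ⊢
      rw [Real.sqrt_sq hσpos.le]
      field_simp
    have hc'' : HasDerivAt (deriv (crease ζ)) (v3 (-2 * q * r / σ) r r) s := by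
      rw [hderiv_c]
      exact hasDerivAt_v3 hσ' hd2 hd2
    have hd2c : deriv (deriv (crease ζ)) s = v3 (-2 * q * r / σ) r r := hc''.deriv
    have h2 : (Real.sqrt 2) ^ 2 = 2 := Real.sq_sqrt (by norm_num)
    have h2pos : (0:ℝ) < Real.sqrt 2 := Real.sqrt_pos.mpr (by norm_num)
    have h2ne : Real.sqrt 2 ≠ 0 := h2pos.ne'
    have hκ : curv (crease ζ) s = -Real.sqrt 2 * r / σ := by
      rw [curv, hd2c, norm_v3]
      rw [show (-2 * q * r / σ) ^ 2 + r ^ 2 + r ^ 2 = (-Real.sqrt 2 * r / σ) ^ 2 by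
        field_simp
        nlinarith [hσsq, h2, sq_nonneg r]]
      apply Real.sqrt_sq
      have : 0 ≤ -Real.sqrt 2 * r := by nlinarith
      exact div_nonneg this hσpos.le
    have hκpos : 0 < curv (crease ζ) s := by
      rw [hκ]
      apply div_pos _ hσpos
      nlinarith
    have hN : nvec (crease ζ) s = (Real.sqrt 2)⁻¹ • v3 (2 * q) (-σ) (-σ) := by
      rw [nvec, hd2c, hκ, smul_v3, smul_v3]
      refine v3_eq ?_ ?_ ?_ <;> field_simp
    refine ⟨hκ, hκpos, hN, ?_⟩
    rw [bvec, hN, hderiv_c]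
    simp only []
    rw [smul_v3, smul_v3, cross3_v3]
    refine v3_eq ?_ ?_ ?_
    · ring
    · linear_combination (Real.sqrt 2)⁻¹ * hσsq
    · linear_combination -(Real.sqrt 2)⁻¹ * hσsq
end
end

section
/- (Proposition 3.2) The origami map X : U → ℝ³ is injective, and hence (U being compact and X continuous) X is a homeomorphism from U onto its image P := X(U). -/
open Real Set

noncomputable section

/-- The domain `U₊ = {(s,v) : 0 ≤ s ≤ L, 0 ≤ v ≤ ζ(s)}`. -/
def Uplus (L : ℝ) (ζ : ℝ → ℝ) : Set (ℝ × ℝ) :=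
  {sv | sv.1 ∈ Set.Icc 0 L ∧ sv.2 ∈ Set.Icc 0 (ζ sv.1)}

/-- The domain `U₋ = {(s,v) : 0 ≤ s ≤ L, ζ(s) − b ≤ v ≤ 0}`. -/
def Uminus (b L : ℝ) (ζ : ℝ → ℝ) : Set (ℝ × ℝ) :=
  {sv | sv.1 ∈ Set.Icc 0 L ∧ sv.2 ∈ Set.Icc (ζ sv.1 - b) 0}

/-- The domain `U = U₊ ∪ U₋`. -/
def Udom (b L : ℝ) (ζ : ℝ → ℝ) : Set (ℝ × ℝ) := Uplus L ζ ∪ Uminus b L ζ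

/-- The origami map `X : U → ℝ³`, `X(s,v) = c(s) + v·(0,0,−1)` for `v ≥ 0` and
`X(s,v) = c(s) + v·(0,−1,0)` for `v < 0`. -/
def origamiMap (ζ : ℝ → ℝ) (sv : ℝ × ℝ) : E3 :=
  if 0 ≤ sv.2 then crease ζ sv.1 + sv.2 • v3 0 0 (-1)
  else crease ζ sv.1 + sv.2 • v3 0 (-1) 0


/-- Auxiliary: coordinate formula for the origami map when `0 ≤ v`. -/
lemma origami_apply_nonneg (ζ : ℝ → ℝ) (s v : ℝ) (hv : 0 ≤ v) :
    origamiMap ζ (s, v) = v3 (∫ w in (0:ℝ)..s, sig ζ w) (ζ s) (ζ s - v) := by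
  simp only [origamiMap, crease, if_pos hv]
  ext i
  fin_cases i <;>
    simp [v3, PiLp.add_apply, PiLp.smul_apply, Matrix.cons_val_zero, Matrix.cons_val_one,
      Matrix.head_cons, sub_eq_add_neg, mul_comm]

/-- Auxiliary: coordinate formula for the origami map when `v < 0`. -/
lemma origami_apply_neg (ζ : ℝ → ℝ) (s v : ℝ) (hv : v < 0) :
    origamiMap ζ (s, v) = v3 (∫ w in (0:ℝ)..s, sig ζ w) (ζ s - v) (ζ s) := by
  simp only [origamiMap, crease, if_neg (not_le.mpr hv)]
  ext i
  fin_cases i <;>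
    simp [v3, PiLp.add_apply, PiLp.smul_apply, Matrix.cons_val_zero, Matrix.cons_val_one,
      Matrix.head_cons, sub_eq_add_neg, mul_comm, add_comm] <;> ring

lemma v3_inj {a b c a' b' c' : ℝ} (h : v3 a b c = v3 a' b' c') :
    a = a' ∧ b = b' ∧ c = c' := by
  refine ⟨congrArg (fun x : E3 => x 0) h, congrArg (fun x : E3 => x 1) h, congrArg (fun x : E3 => x 2) h⟩

lemma sig_continuous {ζ : ℝ → ℝ} (hζ : ContDiff ℝ (⊤ : ℕ∞) ζ) : Continuous (sig ζ) := by
  have hd : Continuous (deriv ζ) := hζ.continuous_deriv (by simp)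
  exact Real.continuous_sqrt.comp (by continuity)

lemma xint_strictMonoOn {L : ℝ} {ζ : ℝ → ℝ} (hζ : ContDiff ℝ (⊤ : ℕ∞) ζ)
    (hslope : ∀ s ∈ Set.Icc (0:ℝ) L, 0 < 1 - 2 * (deriv ζ s) ^ 2) :
    StrictMonoOn (fun s => ∫ w in (0:ℝ)..s, sig ζ w) (Set.Icc 0 L) := by
  have hc := sig_continuous hζ
  intro s hs t ht hst
  have hint : ∀ a b : ℝ, IntervalIntegrable (sig ζ) MeasureTheory.volume a b :=
    fun a b => hc.intervalIntegrable a b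
  have hsplit : (∫ w in (0:ℝ)..s, sig ζ w) + (∫ w in s..t, sig ζ w)
      = ∫ w in (0:ℝ)..t, sig ζ w :=
    intervalIntegral.integral_add_adjacent_intervals (hint 0 s) (hint s t)
  have hpos : 0 < ∫ w in s..t, sig ζ w := by
    apply intervalIntegral.intervalIntegral_pos_of_pos_on (hint s t)
    · intro x hx
      have hx' : x ∈ Set.Icc (0:ℝ) L :=
        ⟨le_trans hs.1 hx.1.le, le_trans hx.2.le ht.2⟩
      exact Real.sqrt_pos.mpr (hslope x hx')
    · exact hst
  simp only []
  linarith

lemma crease_continuous {ζ : ℝ → ℝ} (hζ : ContDiff ℝ (⊤ : ℕ∞) ζ) : Continuous (crease ζ) := by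
  have hx : Continuous fun s => ∫ w in (0:ℝ)..s, sig ζ w :=
    intervalIntegral.continuous_primitive
      (fun a b => (sig_continuous hζ).intervalIntegrable a b) 0
  have : Continuous fun s => (![∫ w in (0:ℝ)..s, sig ζ w, ζ s, ζ s] : Fin 3 → ℝ) := by
    apply continuous_pi
    intro i
    fin_cases i
    · exact hx
    · exact hζ.continuous
    · exact hζ.continuous
  exact (PiLp.continuous_toLp 2 _).comp this

lemma origami_continuous {ζ : ℝ → ℝ} (hζ : ContDiff ℝ (⊤ : ℕ∞) ζ) :
    Continuous (origamiMap ζ) := by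
  have hc : Continuous fun sv : ℝ × ℝ => crease ζ sv.1 :=
    (crease_continuous hζ).comp continuous_fst
  have h1 : Continuous fun sv : ℝ × ℝ => crease ζ sv.1 + sv.2 • v3 0 0 (-1) :=
    hc.add (continuous_snd.smul continuous_const)
  have h2 : Continuous fun sv : ℝ × ℝ => crease ζ sv.1 + sv.2 • v3 0 (-1) 0 :=
    hc.add (continuous_snd.smul continuous_const)
  have heq : ∀ sv : ℝ × ℝ, (0:ℝ) = sv.2 →
      crease ζ sv.1 + sv.2 • v3 0 0 (-1) = crease ζ sv.1 + sv.2 • v3 0 (-1) 0 := by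
    intro sv h
    rw [← h]
    simp
  exact Continuous.if_le h1 h2 continuous_const continuous_snd heq

lemma Udom_compact {b L : ℝ} {ζ : ℝ → ℝ} (hb : 0 < b) (hζc : Continuous ζ)
    (hζ0 : ζ 0 = 0) (hζL : ζ L = 0)
    (hrange : ∀ s ∈ Set.Ioo (0:ℝ) L, 0 < ζ s ∧ ζ s < b) :
    IsCompact (Udom b L ζ) := by
  have hclosed : IsClosed (Udom b L ζ) := by
    apply IsClosed.union
    · have : Uplus L ζ = (Set.Icc 0 L ×ˢ Set.univ) ∩
          {sv : ℝ × ℝ | 0 ≤ sv.2} ∩ {sv : ℝ × ℝ | sv.2 ≤ ζ sv.1} := by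
        ext sv
        simp [Uplus, Set.mem_Icc, and_assoc]
      rw [this]
      exact (((isClosed_Icc.prod isClosed_univ).inter
        (isClosed_le continuous_const continuous_snd)).inter
        (isClosed_le continuous_snd (hζc.comp continuous_fst)))
    · have : Uminus b L ζ = (Set.Icc 0 L ×ˢ Set.univ) ∩
          {sv : ℝ × ℝ | ζ sv.1 - b ≤ sv.2} ∩ {sv : ℝ × ℝ | sv.2 ≤ 0} := by
        ext sv
        simp [Uminus, Set.mem_Icc, and_assoc]
      rw [this]
      exact (((isClosed_Icc.prod isClosed_univ).inter
        (isClosed_le ((hζc.comp continuous_fst).sub continuous_const) continuous_snd)).inter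
        (isClosed_le continuous_snd continuous_const))
  have hζb : ∀ s ∈ Set.Icc (0:ℝ) L, 0 ≤ ζ s ∧ ζ s ≤ b := by
    intro s hs
    rcases eq_or_lt_of_le hs.1 with h0 | h0
    · simp [← h0, hζ0, hb.le]
    rcases eq_or_lt_of_le hs.2 with hL' | hL'
    · simp [hL', hζL, hb.le]
    · exact ⟨(hrange s ⟨h0, hL'⟩).1.le, (hrange s ⟨h0, hL'⟩).2.le⟩
  have hsub : Udom b L ζ ⊆ Set.Icc 0 L ×ˢ Set.Icc (-b) b := by
    rintro ⟨s, v⟩ (⟨hs, hv⟩ | ⟨hs, hv⟩)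
    · exact ⟨hs, ⟨le_trans (neg_nonpos.mpr hb.le) hv.1,
        le_trans hv.2 (hζb s hs).2⟩⟩
    · exact ⟨hs, ⟨le_trans (by linarith [(hζb s hs).1]) hv.1,
        le_trans hv.2 hb.le⟩⟩
  exact (isCompact_Icc.prod isCompact_Icc).of_isClosed_subset hclosed hsub

lemma origami_injOn {b L : ℝ} {ζ : ℝ → ℝ} (hζ : ContDiff ℝ (⊤ : ℕ∞) ζ)
    (hslope : ∀ s ∈ Set.Icc (0:ℝ) L, 0 < 1 - 2 * (deriv ζ s) ^ 2) :
    Set.InjOn (origamiMap ζ) (Udom b L ζ) := by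
  have hmono := xint_strictMonoOn hζ hslope
  rintro ⟨s, v⟩ hsv ⟨t, u⟩ htu heq
  have hsI : s ∈ Set.Icc (0:ℝ) L := by
    rcases hsv with h | h <;> exact h.1
  have htI : t ∈ Set.Icc (0:ℝ) L := by
    rcases htu with h | h <;> exact h.1
  rcases le_or_gt 0 v with hv | hv <;> rcases le_or_gt 0 u with hu | hu
  · rw [origami_apply_nonneg ζ s v hv, origami_apply_nonneg ζ t u hu] at heq
    obtain ⟨h1, h2, h3⟩ := v3_inj heq
    have hst : s = t := hmono.injOn hsI htI h1
    subst hst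
    have huv : v = u := by linarith
    rw [huv]
  · rw [origami_apply_nonneg ζ s v hv, origami_apply_neg ζ t u hu] at heq
    obtain ⟨h1, h2, h3⟩ := v3_inj heq
    have hst : s = t := hmono.injOn hsI htI h1
    subst hst
    exact absurd h2 (by intro h; linarith)
  · rw [origami_apply_neg ζ s v hv, origami_apply_nonneg ζ t u hu] at heq
    obtain ⟨h1, h2, h3⟩ := v3_inj heq
    have hst : s = t := hmono.injOn hsI htI h1
    subst hst
    exact absurd h2 (by intro h; linarith)
  · rw [origami_apply_neg ζ s v hv, origami_apply_neg ζ t u hu] at heq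
    obtain ⟨h1, h2, h3⟩ := v3_inj heq
    have hst : s = t := hmono.injOn hsI htI h1
    subst hst
    have huv : v = u := by linarith
    rw [huv]

/-- Proposition 3.2: the origami map `X` is injective on `U`, and is a
homeomorphism from `U` onto its image `P = X(U)`. -/
theorem origamiMap_injOn_homeomorph
    (b L : ℝ) (hb : 0 < b) (hL : 0 < L) (ζ : ℝ → ℝ) (hζ : ContDiff ℝ (⊤ : ℕ∞) ζ)
    (hζ0 : ζ 0 = 0) (hζL : ζ L = 0)
    (hslope : ∀ s ∈ Set.Icc (0:ℝ) L, 0 < 1 - 2 * (deriv ζ s) ^ 2)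
    (hrange : ∀ s ∈ Set.Ioo (0:ℝ) L, 0 < ζ s ∧ ζ s < b)
    (hconc : ∀ s ∈ Set.Ioo (0:ℝ) L, deriv (deriv ζ) s < 0) :
    Set.InjOn (origamiMap ζ) (Udom b L ζ) ∧
    ∃ φ : (Udom b L ζ) ≃ₜ (origamiMap ζ '' Udom b L ζ),
      ∀ u : Udom b L ζ, (φ u : E3) = origamiMap ζ u := by
  have hinj := origami_injOn (b := b) (L := L) hζ hslope
  refine ⟨hinj, ?_⟩
  have hcomp : IsCompact (Udom b L ζ) :=
    Udom_compact hb hζ.continuous hζ0 hζL hrange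
  haveI : CompactSpace (Udom b L ζ) := isCompact_iff_compactSpace.mp hcomp
  let e : (Udom b L ζ) ≃ (origamiMap ζ '' Udom b L ζ) :=
    Equiv.Set.imageOfInjOn (origamiMap ζ) (Udom b L ζ) hinj
  have hce : Continuous e := by
    apply Continuous.subtype_mk
    exact (origami_continuous hζ).comp continuous_subtype_val
  exact ⟨hce.homeoOfEquivCompactToT2 (f := e), fun u => rfl⟩
end
end

section
/- The developing map Y is a bijection from U onto the closed planar rectangle Ω := {(x, y, 0) : 0 ≤ x ≤ 2a, 0 ≤ y ≤ b}, where a := (1/2)·∫₀ᴸ √(1 − ζ′(s)²) ds. -/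
open Real Set

noncomputable section

/-- The developing map `Y(s,v) = γ(s) + v·(0,−1,0)`. -/
def developMap (ζ : ℝ → ℝ) (sv : ℝ × ℝ) : E3 := pattern ζ sv.1 + sv.2 • v3 0 (-1) 0


lemma developMap_apply' (ζ : ℝ → ℝ) (s v : ℝ) :
    developMap ζ (s, v) =
      v3 (∫ w in (0:ℝ)..s, Real.sqrt (1 - (deriv ζ w) ^ 2)) (ζ s - v) 0 := by
  unfold developMap pattern
  ext i
  fin_cases i <;> simp [v3] <;> ring

/-- the developing map `Y` is a bijection from `U` onto the closed planar
rectangle `Ω = {(x,y,0) : 0 ≤ x ≤ 2a, 0 ≤ y ≤ b}` with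
`a = (1/2)·∫₀ᴸ √(1 − ζ′(s)²) ds`. -/
theorem developing_map_bijOn_rectangle
    (b L : ℝ) (hb : 0 < b) (hL : 0 < L) (ζ : ℝ → ℝ) (hζ : ContDiff ℝ (⊤ : ℕ∞) ζ)
    (hζ0 : ζ 0 = 0) (hζL : ζ L = 0)
    (hslope : ∀ s ∈ Set.Icc (0:ℝ) L, 0 < 1 - 2 * (deriv ζ s) ^ 2)
    (hrange : ∀ s ∈ Set.Ioo (0:ℝ) L, 0 < ζ s ∧ ζ s < b)
    (hconc : ∀ s ∈ Set.Ioo (0:ℝ) L, deriv (deriv ζ) s < 0)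
    (a : ℝ) (ha : a = (1/2) * ∫ s in (0:ℝ)..L, Real.sqrt (1 - (deriv ζ s) ^ 2)) :
    Set.BijOn (developMap ζ) (Udom b L ζ)
      {p : E3 | 0 ≤ p 0 ∧ p 0 ≤ 2 * a ∧ 0 ≤ p 1 ∧ p 1 ≤ b ∧ p 2 = 0} := by
  set g : ℝ → ℝ := fun w => Real.sqrt (1 - (deriv ζ w) ^ 2) with hg_def
  set F : ℝ → ℝ := fun s => ∫ w in (0:ℝ)..s, g w with hF_def
  have hζ' : Continuous (deriv ζ) := hζ.continuous_deriv (by simp)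
  have hgc : Continuous g := by
    rw [hg_def]; fun_prop
  have hFderiv : ∀ s : ℝ, HasDerivAt F (g s) s := fun s =>
    (hgc.integral_hasStrictDerivAt 0 s).hasDerivAt
  have hFcont : Continuous F := continuous_iff_continuousAt.mpr fun s => (hFderiv s).continuousAt
  have hgpos : ∀ s ∈ Icc (0:ℝ) L, 0 < g s := by
    intro s hs
    have h2 := hslope s hs
    have : (deriv ζ s) ^ 2 < 1 := by nlinarith [sq_nonneg (deriv ζ s)]
    exact Real.sqrt_pos.mpr (by linarith)
  have hmono : StrictMonoOn F (Icc 0 L) := by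
    apply strictMonoOn_of_deriv_pos (convex_Icc 0 L) hFcont.continuousOn
    intro x hx
    rw [interior_Icc] at hx
    rw [(hFderiv x).deriv]
    exact hgpos x (Ioo_subset_Icc_self hx)
  have hF0 : F 0 = 0 := intervalIntegral.integral_same
  have hFL : F L = 2 * a := by rw [ha]; ring
  have hζbd : ∀ s ∈ Icc (0:ℝ) L, 0 ≤ ζ s ∧ ζ s ≤ b := by
    intro s hs
    rcases eq_or_lt_of_le hs.1 with h0 | h0
    · rw [← h0, hζ0]; exact ⟨le_refl 0, hb.le⟩
    rcases eq_or_lt_of_le hs.2 with hL' | hL'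
    · rw [hL', hζL]; exact ⟨le_refl 0, hb.le⟩
    · have := hrange s ⟨h0, hL'⟩
      exact ⟨this.1.le, this.2.le⟩
  have hFbd : ∀ s ∈ Icc (0:ℝ) L, 0 ≤ F s ∧ F s ≤ 2 * a := by
    intro s hs
    constructor
    · rw [← hF0]
      rcases eq_or_lt_of_le hs.1 with h | h
      · rw [h]
      · exact (hmono (left_mem_Icc.mpr hL.le) hs h).le
    · rw [← hFL]
      rcases eq_or_lt_of_le hs.2 with h | h
      · rw [h]
      · exact (hmono hs (right_mem_Icc.mpr hL.le) h).le
  have hYeq : ∀ s v : ℝ, developMap ζ (s, v) = v3 (F s) (ζ s - v) 0 :=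
    fun s v => developMap_apply' ζ s v
  have hv3 : ∀ x y z : ℝ, (v3 x y z) 0 = x ∧ (v3 x y z) 1 = y ∧ (v3 x y z) 2 = z := by
    intro x y z; refine ⟨rfl, rfl, rfl⟩
  constructor
  · -- MapsTo
    rintro ⟨s, v⟩ hsv
    rcases hsv with ⟨hs, hv⟩ | ⟨hs, hv⟩ <;>
    · have hFb := hFbd s hs
      have hζb := hζbd s hs
      rw [Set.mem_setOf_eq, hYeq s v]
      rcases hv3 (F s) (ζ s - v) 0 with ⟨e0, e1, e2⟩
      rw [e0, e1, e2]
      refine ⟨hFb.1, hFb.2, by linarith [hv.1, hv.2, hζb.1, hζb.2], by linarith [hv.1, hv.2, hζb.1, hζb.2], rfl⟩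
  constructor
  · -- InjOn
    rintro ⟨s, v⟩ hsv ⟨s', v'⟩ hsv' heq
    rw [hYeq s v, hYeq s' v'] at heq
    have h0 : F s = F s' := congrFun (congrArg WithLp.ofLp heq) 0
    have h1 : ζ s - v = ζ s' - v' := congrFun (congrArg WithLp.ofLp heq) 1
    have hsIcc : s ∈ Icc (0:ℝ) L := by rcases hsv with h | h <;> exact h.1
    have hsIcc' : s' ∈ Icc (0:ℝ) L := by rcases hsv' with h | h <;> exact h.1
    have hss : s = s' := hmono.injOn hsIcc hsIcc' h0
    subst hss
    have : v = v' := by linarith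
    rw [this]
  · -- SurjOn
    rintro p ⟨hp0, hp2a, hp1, hpb, hpz⟩
    have hx : p 0 ∈ Icc (F 0) (F L) := by rw [hF0, hFL]; exact ⟨hp0, hp2a⟩
    obtain ⟨s, hs, hFs⟩ := intermediate_value_Icc hL.le hFcont.continuousOn hx
    have hζb := hζbd s hs
    refine ⟨(s, ζ s - p 1), ?_, ?_⟩
    · rcases le_or_gt (p 1) (ζ s) with hcase | hcase
      · exact Or.inl ⟨hs, by constructor <;> simp <;> linarith⟩
      · exact Or.inr ⟨hs, by constructor <;> simp <;> linarith⟩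
    · rw [hYeq]
      ext i
      fin_cases i
      · show F s = p 0; exact hFs
      · show ζ s - (ζ s - p 1) = p 1; ring
      · show (0:ℝ) = p 2; exact hpz.symm
end
end

section
/- (Lemma 4.6) Let c : [0,L] → ℝ³ be a unit-speed C^∞ curve with curvature κ(s) := ‖c″(s)‖ > 0 for all s; set T := c′, N := c″/κ, B := T × N, and torsion τ(s) := ⟨N′(s), B(s)⟩. Let α : [0,L] → ℝ be smooth with 0 < |α(s)| < π/2, and let β, β̌ : [0,L] → (0,π) be smooth functions satisfying cos β(s)/sin β(s) = (α′(s) + τ(s))/(κ(s) sin α(s)) and cos β̌(s)/sin β̌(s) = (α′(s) − τ(s))/(κ(s) sin α(s)). Define the ruled surfaces p(s,v) := c(s) + v·ξ(s) with ξ := cos β·T + sin β·(cos α·N + sin α·B), and q(s,v) := c(s) + v·ξ̌(s) with ξ̌ := cos β̌·T + sin β̌·(cos α·N − sin α·B). Then the following are equivalent: (i) τ(s) = 0 for all s (c is a plane curve); (ii) β(s) = β̌(s) for all s; (iii) the first fundamental forms of p and q coincide, i.e., for all (s,v) ∈ [0,L] × ℝ: ‖∂p/∂s(s,v)‖ = ‖∂q/∂s(s,v)‖,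 ⟨∂p/∂s, ∂p/∂v⟩(s,v) = ⟨∂q/∂s, ∂q/∂v⟩(s,v), and ‖∂p/∂v‖ = ‖∂q/∂v‖. -/
open Real Set

noncomputable section

/-- The torsion `τ(s) = ⟨N′(s), B(s)⟩` of a space curve. -/
def tor (c : ℝ → E3) (s : ℝ) : ℝ := inner ℝ (deriv (nvec c) s) (bvec c s)

/-- The ruling direction `ξ = cos β·T + sin β·(cos α·N + sin α·B)` of `p`. -/
def xiP (c : ℝ → E3) (al be : ℝ → ℝ) (s : ℝ) : E3 :=
  Real.cos (be s) • deriv c s +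
    Real.sin (be s) • (Real.cos (al s) • nvec c s + Real.sin (al s) • bvec c s)

/-- The ruling direction `ξ̌ = cos β̌·T + sin β̌·(cos α·N − sin α·B)` of the dual `q`. -/
def xiQ (c : ℝ → E3) (al bec : ℝ → ℝ) (s : ℝ) : E3 :=
  Real.cos (bec s) • deriv c s +
    Real.sin (bec s) • (Real.cos (al s) • nvec c s - Real.sin (al s) • bvec c s)

/- ### Auxiliary algebraic lemmas -/

lemma inner3 (x y : E3) : (inner ℝ x y : ℝ) = x 0 * y 0 + x 1 * y 1 + x 2 * y 2 := by
  simp [PiLp.inner_apply, Fin.sum_univ_three, RCLike.inner_apply, mul_comm]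

lemma cross3_apply0 (u w : E3) : cross3 u w 0 = u 1 * w 2 - u 2 * w 1 := rfl
lemma cross3_apply1 (u w : E3) : cross3 u w 1 = u 2 * w 0 - u 0 * w 2 := rfl
lemma cross3_apply2 (u w : E3) : cross3 u w 2 = u 0 * w 1 - u 1 * w 0 := rfl

lemma inner_cross_left (u w : E3) : (inner ℝ u (cross3 u w) : ℝ) = 0 := by
  rw [inner3, cross3_apply0, cross3_apply1, cross3_apply2]; ring

lemma inner_cross_right (u w : E3) : (inner ℝ w (cross3 u w) : ℝ) = 0 := by
  rw [inner3, cross3_apply0, cross3_apply1, cross3_apply2]; ring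

lemma cross3_smul_self (w : E3) (a : ℝ) : cross3 (a • w) w = 0 := by
  ext i; fin_cases i <;>
    simp [cross3, v3, PiLp.smul_apply, smul_eq_mul] <;> ring

/- ### Derivatives of `E3`-valued functions -/

lemma hasDerivAt_E3 {f : ℝ → E3} {f' : E3} {x : ℝ}
    (h : ∀ i, HasDerivAt (fun t => f t i) (f' i) x) : HasDerivAt f f' x := by
  have hg : HasDerivAt (fun t => (fun i => f t i : Fin 3 → ℝ)) (fun i => f' i) x :=
    hasDerivAt_pi.2 h
  have := ((PiLp.continuousLinearEquiv 2 ℝ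
    (fun _ : Fin 3 => ℝ)).symm.toContinuousLinearMap.hasFDerivAt).comp_hasDerivAt x hg
  exact this

lemma hasDerivAt_comp_E3 {f : ℝ → E3} {f' : E3} {x : ℝ} (i : Fin 3)
    (h : HasDerivAt f f' x) : HasDerivAt (fun t => f t i) (f' i) x := by
  have := ((PiLp.continuousLinearEquiv 2 ℝ
    (fun _ : Fin 3 => ℝ)).toContinuousLinearMap.hasFDerivAt).comp_hasDerivAt x h
  exact hasDerivAt_pi.1 this i

lemma hasDerivAt_cross3 {f g : ℝ → E3} {f' g' : E3} {x : ℝ}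
    (hf : HasDerivAt f f' x) (hg : HasDerivAt g g' x) :
    HasDerivAt (fun t => cross3 (f t) (g t)) (cross3 f' (g x) + cross3 (f x) g') x := by
  apply hasDerivAt_E3
  intro i
  have h0f := hasDerivAt_comp_E3 0 hf; have h1f := hasDerivAt_comp_E3 1 hf
  have h2f := hasDerivAt_comp_E3 2 hf
  have h0g := hasDerivAt_comp_E3 0 hg; have h1g := hasDerivAt_comp_E3 1 hg
  have h2g := hasDerivAt_comp_E3 2 hg
  fin_cases i
  · have : HasDerivAt (fun t => f t 1 * g t 2 - f t 2 * g t 1)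
        ((f' 1 * g x 2 + f x 1 * g' 2) - (f' 2 * g x 1 + f x 2 * g' 1)) x :=
      ((h1f.mul h2g).sub (h2f.mul h1g))
    convert this using 1
    show cross3 f' (g x) 0 + cross3 (f x) g' 0 = _
    rw [cross3_apply0, cross3_apply0]; ring
    rfl
  · have : HasDerivAt (fun t => f t 2 * g t 0 - f t 0 * g t 2)
        ((f' 2 * g x 0 + f x 2 * g' 0) - (f' 0 * g x 2 + f x 0 * g' 2)) x :=
      ((h2f.mul h0g).sub (h0f.mul h2g))
    convert this using 1
    show cross3 f' (g x) 1 + cross3 (f x) g' 1 = _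
    rw [cross3_apply1, cross3_apply1]; ring
    rfl
  · have : HasDerivAt (fun t => f t 0 * g t 1 - f t 1 * g t 0)
        ((f' 0 * g x 1 + f x 0 * g' 1) - (f' 1 * g x 0 + f x 1 * g' 0)) x :=
      ((h0f.mul h1g).sub (h1f.mul h0g))
    convert this using 1
    show cross3 f' (g x) 2 + cross3 (f x) g' 2 = _
    rw [cross3_apply2, cross3_apply2]; ring
    rfl

/- ### Misc helpers -/

lemma deriv_congr_Icc {F : Type*} [NormedAddCommGroup F] [NormedSpace ℝ F]
    {L s : ℝ} (hL : 0 < L) (hs : s ∈ Icc (0:ℝ) L) {f g : ℝ → F}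
    (hf : DifferentiableAt ℝ f s) (h : EqOn f g (Icc (0:ℝ) L))
    (hg : DifferentiableAt ℝ g s) : deriv f s = deriv g s := by
  have hu := (uniqueDiffOn_Icc hL) s hs
  rw [← hf.derivWithin hu, ← hg.derivWithin hu]
  exact derivWithin_congr h (h hs)

lemma norm_eq_of_inner_self_eq {x y : E3} (h : (inner ℝ x x : ℝ) = inner ℝ y y) : ‖x‖ = ‖y‖ := by
  have hx : ‖x‖ ^ 2 = ‖y‖ ^ 2 := by
    rw [← real_inner_self_eq_norm_sq, ← real_inner_self_eq_norm_sq]; exact h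
  have := congrArg Real.sqrt hx
  rwa [Real.sqrt_sq (norm_nonneg x), Real.sqrt_sq (norm_nonneg y)] at this

lemma inner_lin_eq (T N B : E3) (cb sb ca sa : ℝ) (h1 : (inner ℝ T B : ℝ) = 0) :
    (inner ℝ T (cb • T + sb • (ca • N + sa • B)) : ℝ)
      = inner ℝ T (cb • T + sb • (ca • N - sa • B)) := by
  simp only [inner_add_right, inner_sub_right, real_inner_smul_right, h1]; ring

lemma inner_self_add_smul (T x : E3) (v : ℝ) :
    (inner ℝ (T + v • x) (T + v • x) : ℝ)
      = inner ℝ T T + 2 * v * inner ℝ T x + v ^ 2 * inner ℝ x x := by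
  simp only [inner_add_left, inner_add_right, real_inner_smul_left, real_inner_smul_right]
  rw [real_inner_comm x T]; ring

lemma inner_quad_eq (T N B : E3) (cb sb ca sa : ℝ)
    (h1 : (inner ℝ T B : ℝ) = 0) (h2 : (inner ℝ N B : ℝ) = 0) :
    (inner ℝ (cb • T + sb • (ca • N + sa • B)) (cb • T + sb • (ca • N + sa • B)) : ℝ)
      = inner ℝ (cb • T + sb • (ca • N - sa • B)) (cb • T + sb • (ca • N - sa • B)) := by
  have h1' : (inner ℝ B T : ℝ) = 0 := by rw [real_inner_comm]; exact h1
  have h2' : (inner ℝ B N : ℝ) = 0 := by rw [real_inner_comm]; exact h2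
  simp only [inner_add_left, inner_add_right, inner_sub_left, inner_sub_right,
    real_inner_smul_left, real_inner_smul_right, h1, h2, h1', h2']
  ring

set_option maxHeartbeats 1000000 in
/-- Lemma 4.6: for mutually dual developable surfaces
`p(s,v) = c(s) + v·ξ(s)` and `q(s,v) = c(s) + v·ξ̌(s)` along a unit-speed curve `c` with
positive curvature, the following are equivalent: (i) `c` is a plane curve (`τ ≡ 0`);
(ii) the second angular functions coincide (`β ≡ β̌`); (iii) the first fundamental forms
of `p` and `q` coincide. -/
theorem dual_developables_tfae
    (L : ℝ) (hL : 0 < L) (c : ℝ → E3) (hc : ContDiff ℝ (⊤ : ℕ∞) c)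
    (hunit : ∀ s ∈ Set.Icc (0:ℝ) L, ‖deriv c s‖ = 1)
    (hcurv : ∀ s ∈ Set.Icc (0:ℝ) L, 0 < curv c s)
    (al be bec : ℝ → ℝ)
    (hal : ContDiff ℝ (⊤ : ℕ∞) al) (hbe : ContDiff ℝ (⊤ : ℕ∞) be) (hbec : ContDiff ℝ (⊤ : ℕ∞) bec)
    (halrange : ∀ s ∈ Set.Icc (0:ℝ) L, 0 < |al s| ∧ |al s| < π / 2)
    (hberange : ∀ s ∈ Set.Icc (0:ℝ) L, be s ∈ Set.Ioo 0 π ∧ bec s ∈ Set.Ioo 0 π)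
    (hbeeq : ∀ s ∈ Set.Icc (0:ℝ) L,
      Real.cos (be s) / Real.sin (be s)
        = (deriv al s + tor c s) / (curv c s * Real.sin (al s)))
    (hbeceq : ∀ s ∈ Set.Icc (0:ℝ) L,
      Real.cos (bec s) / Real.sin (bec s)
        = (deriv al s - tor c s) / (curv c s * Real.sin (al s))) :
    ((∀ s ∈ Set.Icc (0:ℝ) L, tor c s = 0) ↔
      (∀ s ∈ Set.Icc (0:ℝ) L, be s = bec s)) ∧
    ((∀ s ∈ Set.Icc (0:ℝ) L, be s = bec s) ↔
      (∀ s ∈ Set.Icc (0:ℝ) L, ∀ v : ℝ,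
        ‖deriv (fun s' => c s' + v • xiP c al be s') s‖
          = ‖deriv (fun s' => c s' + v • xiQ c al bec s') s‖ ∧
        (inner ℝ (deriv (fun s' => c s' + v • xiP c al be s') s) (xiP c al be s) : ℝ)
          = (inner ℝ (deriv (fun s' => c s' + v • xiQ c al bec s') s) (xiQ c al bec s) : ℝ) ∧
        ‖xiP c al be s‖ = ‖xiQ c al bec s‖)) := by
  -- basic smoothness
  have hcinf : ContDiff ℝ (⊤ : ℕ∞) c := hc.of_le (by simp)
  have hdc : Differentiable ℝ c := hcinf.differentiable (by simp)
  have hcT : ContDiff ℝ (⊤ : ℕ∞) (deriv c) := (contDiff_infty_iff_deriv.1 hcinf).2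
  have hdT : Differentiable ℝ (deriv c) := hcT.differentiable (by simp)
  have hcA : ContDiff ℝ (⊤ : ℕ∞) (deriv (deriv c)) := (contDiff_infty_iff_deriv.1 hcT).2
  have hdA : Differentiable ℝ (deriv (deriv c)) := hcA.differentiable (by simp)
  have halD : ∀ x : ℝ, DifferentiableAt ℝ al x := fun x => (hal.of_le (by simp)).differentiable (by simp : (1:WithTop ℕ∞) ≠ 0) x
  have hbeD : ∀ x : ℝ, DifferentiableAt ℝ be x := fun x => (hbe.of_le (by simp)).differentiable (by simp : (1:WithTop ℕ∞) ≠ 0) x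
  have hbecD : ∀ x : ℝ, DifferentiableAt ℝ bec x :=
    fun x => (hbec.of_le (by simp)).differentiable (by simp : (1:WithTop ℕ∞) ≠ 0) x
  -- algebraic orthogonality of the frame
  have zTB : ∀ x : ℝ, (inner ℝ (deriv c x) (bvec c x) : ℝ) = 0 := fun x => inner_cross_left _ _
  have zNB : ∀ x : ℝ, (inner ℝ (nvec c x) (bvec c x) : ℝ) = 0 := fun x => inner_cross_right _ _
  -- sin of al is nonzero
  have hsinal : ∀ s ∈ Set.Icc (0:ℝ) L, Real.sin (al s) ≠ 0 := by
    intro s hs h0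
    obtain ⟨hpos, hlt⟩ := halrange s hs
    obtain ⟨n, hn⟩ := Real.sin_eq_zero_iff.1 h0
    have hπ := Real.pi_pos
    rcases eq_or_ne n 0 with h | h
    · rw [h] at hn; simp at hn; rw [← hn] at hpos; simp at hpos
    · have h1 : (1:ℝ) ≤ |(n:ℝ)| := by exact_mod_cast Int.one_le_abs h
      have : |al s| = |(n:ℝ)| * π := by rw [← hn, abs_mul, abs_of_pos hπ]
      nlinarith
  -- (pointwise) torsion zero iff angles equal
  have key21 : ∀ s ∈ Set.Icc (0:ℝ) L, be s = bec s → tor c s = 0 := by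
    intro s hs h
    have e1 := hbeeq s hs
    have e2 := hbeceq s hs
    rw [h] at e1
    have e3 : (deriv al s + tor c s) / (curv c s * Real.sin (al s))
        = (deriv al s - tor c s) / (curv c s * Real.sin (al s)) := e1.symm.trans e2
    have hD : curv c s * Real.sin (al s) ≠ 0 :=
      mul_ne_zero (ne_of_gt (hcurv s hs)) (hsinal s hs)
    rw [div_left_inj' hD] at e3
    linarith
  have key12 : ∀ s ∈ Set.Icc (0:ℝ) L, tor c s = 0 → be s = bec s := by
    intro s hs h
    have e1 := hbeeq s hs
    have e2 := hbeceq s hs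
    rw [h] at e1 e2
    simp only [add_zero, sub_zero] at e1 e2
    obtain ⟨hb, hbc⟩ := hberange s hs
    have hsb : 0 < Real.sin (be s) := Real.sin_pos_of_pos_of_lt_pi hb.1 hb.2
    have hsbc : 0 < Real.sin (bec s) := Real.sin_pos_of_pos_of_lt_pi hbc.1 hbc.2
    have e3 : Real.cos (be s) / Real.sin (be s) = Real.cos (bec s) / Real.sin (bec s) :=
      e1.trans e2.symm
    rw [div_eq_div_iff (ne_of_gt hsb) (ne_of_gt hsbc)] at e3
    have hsin0 : Real.sin (be s - bec s) = 0 := by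
      rw [Real.sin_sub]; linarith [e3]
    obtain ⟨n, hn⟩ := Real.sin_eq_zero_iff.1 hsin0
    have hπ := Real.pi_pos
    have hb1 := hb.1; have hb2 := hb.2; have hbc1 := hbc.1; have hbc2 := hbc.2
    have hlt : (n:ℝ) * π < π := by rw [hn]; linarith
    have hgt : -π < (n:ℝ) * π := by rw [hn]; linarith
    have hn1 : (n:ℝ) < 1 := by nlinarith
    have hn2 : (-1:ℝ) < (n:ℝ) := by nlinarith
    have : n = 0 := by
      have h1 : n < 1 := by exact_mod_cast hn1
      have h2 : -1 < n := by exact_mod_cast hn2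
      omega
    rw [this] at hn
    simp at hn
    linarith [hn]
  -- unit-speed consequences
  have hTTi : ∀ x ∈ Set.Icc (0:ℝ) L, (inner ℝ (deriv c x) (deriv c x) : ℝ) = 1 := by
    intro x hx
    rw [real_inner_self_eq_norm_sq, hunit x hx]; norm_num
  have hTA : ∀ x ∈ Set.Icc (0:ℝ) L, (inner ℝ (deriv c x) (deriv (deriv c) x) : ℝ) = 0 := by
    intro x hx
    have hf : HasDerivAt (fun y => (inner ℝ (deriv c y) (deriv c y) : ℝ))
        ((inner ℝ (deriv c x) (deriv (deriv c) x) : ℝ) + inner ℝ (deriv (deriv c) x) (deriv c x)) x :=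
      HasDerivAt.inner ℝ (hdT x).hasDerivAt (hdT x).hasDerivAt
    have hd : deriv (fun y => (inner ℝ (deriv c y) (deriv c y) : ℝ)) x
        = deriv (fun _ : ℝ => (1:ℝ)) x := by
      refine deriv_congr_Icc hL hx ?_ (fun y hy => hTTi y hy) (differentiableAt_const 1)
      exact DifferentiableAt.inner ℝ (hdT x) (hdT x)
    rw [hf.deriv, deriv_const] at hd
    have hcm := real_inner_comm (deriv c x) (deriv (deriv c) x)
    linarith
  have hTN : ∀ x ∈ Set.Icc (0:ℝ) L, (inner ℝ (deriv c x) (nvec c x) : ℝ) = 0 := by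
    intro x hx
    simp only [nvec]
    rw [real_inner_smul_right, hTA x hx, mul_zero]
  refine ⟨⟨fun h1 s hs => key12 s hs (h1 s hs), fun h2 s hs => key21 s hs (h2 s hs)⟩, ?_, ?_⟩
  · -- (ii) → (iii)
    intro hbb s hs v
    have hκ := hcurv s hs
    have hκne : curv c s ≠ 0 := ne_of_gt hκ
    have hAne : deriv (deriv c) s ≠ 0 := by
      have h : (0:ℝ) < ‖deriv (deriv c) s‖ := hκ
      exact norm_pos_iff.1 h
    have hκdiff : DifferentiableAt ℝ (curv c) s := DifferentiableAt.norm ℝ (hdA s) hAne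
    have hNdiff : DifferentiableAt ℝ (nvec c) s := by
      have : DifferentiableAt ℝ (fun x => (curv c x)⁻¹ • deriv (deriv c) x) s :=
        (hκdiff.inv hκne).smul (hdA s)
      exact this
    have hT_hd : HasDerivAt (deriv c) (deriv (deriv c) s) s := (hdT s).hasDerivAt
    have hN_hd : HasDerivAt (nvec c) (deriv (nvec c) s) s := hNdiff.hasDerivAt
    have hB_hd0 : HasDerivAt (bvec c)
        (cross3 (deriv (deriv c) s) (nvec c s) + cross3 (deriv c s) (deriv (nvec c) s)) s := by
      have := hasDerivAt_cross3 hT_hd hN_hd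
      exact this
    have hAeq : deriv (deriv c) s = curv c s • nvec c s := by
      simp only [nvec]
      rw [smul_inv_smul₀ hκne]
    have hcr0 : cross3 (deriv (deriv c) s) (nvec c s) = 0 := by
      rw [hAeq]; exact cross3_smul_self _ _
    have hB_hd : HasDerivAt (bvec c) (cross3 (deriv c s) (deriv (nvec c) s)) s := by
      rw [hcr0, zero_add] at hB_hd0; exact hB_hd0
    have hBdiff : DifferentiableAt ℝ (bvec c) s := hB_hd.differentiableAt
    have hτ : tor c s = 0 := key21 s hs (hbb s hs)
    have zTBd : (inner ℝ (deriv c s) (cross3 (deriv c s) (deriv (nvec c) s)) : ℝ) = 0 :=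
      inner_cross_left _ _
    have zNdBd : (inner ℝ (deriv (nvec c) s) (cross3 (deriv c s) (deriv (nvec c) s)) : ℝ) = 0 :=
      inner_cross_right _ _
    have zNdB : (inner ℝ (deriv (nvec c) s) (bvec c s) : ℝ) = 0 := hτ
    have zNBd : (inner ℝ (nvec c s) (cross3 (deriv c s) (deriv (nvec c) s)) : ℝ) = 0 := by
      have hz : HasDerivAt (fun x => (inner ℝ (nvec c x) (bvec c x) : ℝ))
          ((inner ℝ (nvec c s) (cross3 (deriv c s) (deriv (nvec c) s)) : ℝ)
            + inner ℝ (deriv (nvec c) s) (bvec c s)) s :=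
        HasDerivAt.inner ℝ hN_hd hB_hd
      have hz0 : (fun x => (inner ℝ (nvec c x) (bvec c x) : ℝ)) = fun _ => 0 := funext zNB
      rw [hz0] at hz
      have h := hz.unique (hasDerivAt_const s 0)
      rw [zNdB] at h; linarith
    have zAB : (inner ℝ (deriv (deriv c) s) (bvec c s) : ℝ) = 0 := by
      rw [hAeq, real_inner_smul_left, zNB s, mul_zero]
    have zABd : (inner ℝ (deriv (deriv c) s) (cross3 (deriv c s) (deriv (nvec c) s)) : ℝ) = 0 := by
      rw [hAeq, real_inner_smul_left, zNBd, mul_zero]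
    -- differentiability of the rulings
    have hxiP : DifferentiableAt ℝ (xiP c al be) s := by
      have : DifferentiableAt ℝ (fun x => Real.cos (be x) • deriv c x +
          Real.sin (be x) • (Real.cos (al x) • nvec c x + Real.sin (al x) • bvec c x)) s :=
        ((hbeD s).cos.smul (hdT s)).add
          ((hbeD s).sin.smul (((halD s).cos.smul hNdiff).add ((halD s).sin.smul hBdiff)))
      exact this
    have hxiQ : DifferentiableAt ℝ (xiQ c al bec) s := by
      have : DifferentiableAt ℝ (fun x => Real.cos (bec x) • deriv c x +
          Real.sin (bec x) • (Real.cos (al x) • nvec c x - Real.sin (al x) • bvec c x)) s :=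
        ((hbecD s).cos.smul (hdT s)).add
          ((hbecD s).sin.smul (((halD s).cos.smul hNdiff).sub ((halD s).sin.smul hBdiff)))
      exact this
    -- the correction field D and the sum field S
    have haD : DifferentiableAt ℝ
        (fun x => (Real.sin (be x) + Real.sin (bec x)) * Real.sin (al x)) s :=
      ((hbeD s).sin.add (hbecD s).sin).mul (halD s).sin
    have hD_hd : HasDerivAt
        (fun x => ((Real.sin (be x) + Real.sin (bec x)) * Real.sin (al x)) • bvec c x)
        (((Real.sin (be s) + Real.sin (bec s)) * Real.sin (al s)) •
            cross3 (deriv c s) (deriv (nvec c) s)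
          + (deriv (fun x => (Real.sin (be x) + Real.sin (bec x)) * Real.sin (al x)) s)
              • bvec c s) s :=
      haD.hasDerivAt.smul hB_hd
    have hDdiff := hD_hd.differentiableAt
    have hb1D : DifferentiableAt ℝ (fun x => Real.cos (be x) + Real.cos (bec x)) s :=
      (hbeD s).cos.add (hbecD s).cos
    have hb2D : DifferentiableAt ℝ
        (fun x => (Real.sin (be x) + Real.sin (bec x)) * Real.cos (al x)) s :=
      ((hbeD s).sin.add (hbecD s).sin).mul (halD s).cos
    have hS_hd : HasDerivAt
        (fun x => (Real.cos (be x) + Real.cos (bec x)) • deriv c x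
          + ((Real.sin (be x) + Real.sin (bec x)) * Real.cos (al x)) • nvec c x)
        (((Real.cos (be s) + Real.cos (bec s)) • deriv (deriv c) s
            + (deriv (fun x => Real.cos (be x) + Real.cos (bec x)) s) • deriv c s)
          + (((Real.sin (be s) + Real.sin (bec s)) * Real.cos (al s)) • deriv (nvec c) s
            + (deriv (fun x => (Real.sin (be x) + Real.sin (bec x)) * Real.cos (al x)) s)
                • nvec c s)) s :=
      (hb1D.hasDerivAt.smul hT_hd).add (hb2D.hasDerivAt.smul hN_hd)
    -- EqOn facts
    have eq1 : EqOn (xiQ c al bec)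
        (fun x => xiP c al be x
          - ((Real.sin (be x) + Real.sin (bec x)) * Real.sin (al x)) • bvec c x)
        (Set.Icc (0:ℝ) L) := by
      intro x hx
      simp only [xiP, xiQ]
      rw [hbb x hx]
      module
    have eq2 : EqOn (fun x => xiP c al be x + xiQ c al bec x)
        (fun x => (Real.cos (be x) + Real.cos (bec x)) • deriv c x
          + ((Real.sin (be x) + Real.sin (bec x)) * Real.cos (al x)) • nvec c x)
        (Set.Icc (0:ℝ) L) := by
      intro x hx
      simp only [xiP, xiQ]
      rw [hbb x hx]
      module
    -- derivative relations
    have hxiQd_eq : deriv (xiQ c al bec) s = deriv (xiP c al be) s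
        - (((Real.sin (be s) + Real.sin (bec s)) * Real.sin (al s)) •
            cross3 (deriv c s) (deriv (nvec c) s)
          + (deriv (fun x => (Real.sin (be x) + Real.sin (bec x)) * Real.sin (al x)) s)
              • bvec c s) := by
      have h1 := deriv_congr_Icc hL hs hxiQ eq1 (hxiP.sub hDdiff)
      have h2 := (hxiP.hasDerivAt.sub hD_hd).deriv
      rw [h1]; exact h2
    have hsum : deriv (xiP c al be) s + deriv (xiQ c al bec) s
        = ((Real.cos (be s) + Real.cos (bec s)) • deriv (deriv c) s
            + (deriv (fun x => Real.cos (be x) + Real.cos (bec x)) s) • deriv c s)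
          + (((Real.sin (be s) + Real.sin (bec s)) * Real.cos (al s)) • deriv (nvec c) s
            + (deriv (fun x => (Real.sin (be x) + Real.sin (bec x)) * Real.cos (al x)) s)
                • nvec c s) := by
      have h3 := deriv_congr_Icc hL hs (hxiP.add hxiQ) eq2 hS_hd.differentiableAt
      have h4 := (hxiP.hasDerivAt.add hxiQ.hasDerivAt).deriv
      rw [← h4, h3, hS_hd.deriv]
    -- the key orthogonality
    have hSdDd : (inner ℝ
        (((Real.cos (be s) + Real.cos (bec s)) • deriv (deriv c) s
            + (deriv (fun x => Real.cos (be x) + Real.cos (bec x)) s) • deriv c s)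
          + (((Real.sin (be s) + Real.sin (bec s)) * Real.cos (al s)) • deriv (nvec c) s
            + (deriv (fun x => (Real.sin (be x) + Real.sin (bec x)) * Real.cos (al x)) s)
                • nvec c s))
        (((Real.sin (be s) + Real.sin (bec s)) * Real.sin (al s)) •
            cross3 (deriv c s) (deriv (nvec c) s)
          + (deriv (fun x => (Real.sin (be x) + Real.sin (bec x)) * Real.sin (al x)) s)
              • bvec c s) : ℝ) = 0 := by
      simp only [inner_add_left, inner_add_right, real_inner_smul_left, real_inner_smul_right,
        zTB, zTBd, zNB, zNBd, zNdB, zNdBd, zAB, zABd, mul_zero, add_zero, zero_add]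
    have hDd0 : (inner ℝ (deriv (xiP c al be) s + deriv (xiQ c al bec) s)
        (((Real.sin (be s) + Real.sin (bec s)) * Real.sin (al s)) •
            cross3 (deriv c s) (deriv (nvec c) s)
          + (deriv (fun x => (Real.sin (be x) + Real.sin (bec x)) * Real.sin (al x)) s)
              • bvec c s) : ℝ) = 0 := by
      rw [hsum]; exact hSdDd
    -- pointwise norm equality of the rulings
    have hPQnorm : ∀ x ∈ Set.Icc (0:ℝ) L,
        (inner ℝ (xiP c al be x) (xiP c al be x) : ℝ)
          = inner ℝ (xiQ c al bec x) (xiQ c al bec x) := by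
      intro x hx
      simp only [xiP, xiQ]
      rw [hbb x hx]
      exact inner_quad_eq _ _ _ _ _ _ _ (zTB x) (zNB x)
    -- derivative inner ℝ equalities
    have hc1 : (inner ℝ (deriv c s) (deriv (xiQ c al bec) s) : ℝ)
        = inner ℝ (deriv c s) (deriv (xiP c al be) s) := by
      rw [hxiQd_eq, inner_sub_right, inner_add_right, real_inner_smul_right,
        real_inner_smul_right, zTBd, zTB s]
      ring
    have hc2 : (inner ℝ (deriv (xiQ c al bec) s) (deriv (xiQ c al bec) s) : ℝ)
        = inner ℝ (deriv (xiP c al be) s) (deriv (xiP c al be) s) := by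
      set d : E3 := ((Real.sin (be s) + Real.sin (bec s)) * Real.sin (al s)) •
            cross3 (deriv c s) (deriv (nvec c) s)
          + (deriv (fun x => (Real.sin (be x) + Real.sin (bec x)) * Real.sin (al x)) s)
              • bvec c s with hd_def
      have h5 : (inner ℝ (deriv (xiQ c al bec) s) d : ℝ) = inner ℝ (deriv (xiP c al be) s) d
          - inner ℝ d d := by rw [hxiQd_eq, inner_sub_left]
      have h6 : (inner ℝ (deriv (xiP c al be) s) d : ℝ) + inner ℝ (deriv (xiQ c al bec) s) d = 0 := by
        rw [← inner_add_left]; exact hDd0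
      have h7 : (inner ℝ d (deriv (xiP c al be) s) : ℝ)
          = inner ℝ (deriv (xiP c al be) s) d := real_inner_comm _ _
      rw [hxiQd_eq, inner_sub_left, inner_sub_right, inner_sub_right]
      linarith
    have hP_hd : HasDerivAt (fun s' => c s' + v • xiP c al be s')
        (deriv c s + v • deriv (xiP c al be) s) s :=
      (hdc s).hasDerivAt.add (hxiP.hasDerivAt.const_smul v)
    have hQ_hd : HasDerivAt (fun s' => c s' + v • xiQ c al bec s')
        (deriv c s + v • deriv (xiQ c al bec) s) s :=
      (hdc s).hasDerivAt.add (hxiQ.hasDerivAt.const_smul v)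
    refine ⟨?_, ?_, ?_⟩
    · rw [hP_hd.deriv, hQ_hd.deriv]
      apply norm_eq_of_inner_self_eq
      rw [inner_self_add_smul, inner_self_add_smul, hc1, hc2]
    · rw [hP_hd.deriv, hQ_hd.deriv]
      have e1 : (inner ℝ (deriv c s) (xiP c al be s) : ℝ) = inner ℝ (deriv c s) (xiQ c al bec s) := by
        simp only [xiP, xiQ]
        rw [hbb s hs]
        exact inner_lin_eq _ _ _ _ _ _ _ (zTB s)
      have e2 : (inner ℝ (deriv (xiP c al be) s) (xiP c al be s) : ℝ)
          = inner ℝ (deriv (xiQ c al bec) s) (xiQ c al bec s) := by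
        have hfP : HasDerivAt (fun x => (inner ℝ (xiP c al be x) (xiP c al be x) : ℝ))
            ((inner ℝ (xiP c al be s) (deriv (xiP c al be) s) : ℝ)
              + inner ℝ (deriv (xiP c al be) s) (xiP c al be s)) s :=
          HasDerivAt.inner ℝ hxiP.hasDerivAt hxiP.hasDerivAt
        have hfQ : HasDerivAt (fun x => (inner ℝ (xiQ c al bec x) (xiQ c al bec x) : ℝ))
            ((inner ℝ (xiQ c al bec s) (deriv (xiQ c al bec) s) : ℝ)
              + inner ℝ (deriv (xiQ c al bec) s) (xiQ c al bec s)) s :=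
          HasDerivAt.inner ℝ hxiQ.hasDerivAt hxiQ.hasDerivAt
        have hde : deriv (fun x => (inner ℝ (xiP c al be x) (xiP c al be x) : ℝ)) s
            = deriv (fun x => (inner ℝ (xiQ c al bec x) (xiQ c al bec x) : ℝ)) s :=
          deriv_congr_Icc hL hs (DifferentiableAt.inner ℝ hxiP hxiP)
            (fun x hx => hPQnorm x hx) (DifferentiableAt.inner ℝ hxiQ hxiQ)
        rw [hfP.deriv, hfQ.deriv] at hde
        have cP := real_inner_comm (xiP c al be s) (deriv (xiP c al be) s)
        have cQ := real_inner_comm (xiQ c al bec s) (deriv (xiQ c al bec) s)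
        linarith
      rw [inner_add_left, inner_add_left, real_inner_smul_left, real_inner_smul_left, e1, e2]
    · exact norm_eq_of_inner_self_eq (hPQnorm s hs)

  · -- (iii) → (ii)
    intro h3 s hs
    have h2 := (h3 s hs 0).2.1
    simp only [zero_smul, add_zero] at h2
    simp only [xiP, xiQ, inner_add_right, inner_sub_right, real_inner_smul_right] at h2
    rw [hTTi s hs, hTN s hs, zTB s] at h2
    have hcos : Real.cos (be s) = Real.cos (bec s) := by
      field_simp at h2
      linarith
    obtain ⟨hb, hbc⟩ := hberange s hs
    exact Real.injOn_cos (Ioo_subset_Icc_self hb) (Ioo_subset_Icc_self hbc) hcos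
end
end

section
/- (Corollary 4.9, quantitative form) Let λ, μ : [0,1] → ℝ be continuous with λ(0) = 1, λ(1) = 0, μ(0) = μ(1) = 0, and suppose 1 − (1 + λ(t)²)ζ′(s)² > 0 for all t ∈ [0,1] and s ∈ [0,L]. For each t define c^t(s) := (μ(t) + ∫₀ˢ √(1 − (1 + λ(t)²)ζ′(w)²) dw, ζ(s), λ(t)ζ(s)) and ξ^t := (1/(1 + λ(t)²))·(0, λ(t)² − 1, −2λ(t)). Then there exists t₁ ∈ (0,1) with λ(t₁) = 1/2, and for this t₁ the third component of the horizontal end Ψ^{t₁}(s) := c^{t₁}(s) + ζ(s)·ξ^{t₁} is strictly negative for every s ∈ (0,L). In particular, the horizontal end of the deformed quarter domain at time t₁ does not lie in the horizontal plane {z = 0}, so the origami deformation necessarily changes the topology of the pillow box. -/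
open Real Set

noncomputable section

/-- `σ_λ(s) = √(1 − (1 + λ²) ζ′(s)²)`. -/
def sigL (ζ : ℝ → ℝ) (lam s : ℝ) : ℝ :=
  Real.sqrt (1 - (1 + lam ^ 2) * (deriv ζ s) ^ 2)

/-- The deformed crease `c_{λ,μ}(s) = (μ + ∫₀ˢ σ_λ(w) dw, ζ(s), λζ(s))`. -/
def creaseL (ζ : ℝ → ℝ) (lam mu s : ℝ) : E3 :=
  v3 (mu + ∫ w in (0:ℝ)..s, sigL ζ lam w) (ζ s) (lam * ζ s)

/-- The deformed ruling direction `ξ_λ = (1/(1+λ²))·(0, λ² − 1, −2λ)`. -/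
def xiL (lam : ℝ) : E3 := (1 + lam ^ 2)⁻¹ • v3 0 (lam ^ 2 - 1) (-(2 * lam))

/-- Corollary 4.9, quantitative form: along any quarter origami
deformation, given by continuous `λ, μ : [0,1] → ℝ` with `λ(0) = 1`, `λ(1) = 0`,
`μ(0) = μ(1) = 0` and the non-degeneracy condition, there is a time `t₁ ∈ (0,1)` with
`λ(t₁) = 1/2` at which the third component of the horizontal end
`Ψ^{t₁}(s) = c^{t₁}(s) + ζ(s)·ξ^{t₁}` is strictly negative on `(0,L)`; hence the
origami deformation necessarily changes the topology of the pillow box. -/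
theorem origami_deformation_changes_topology
    (b L : ℝ) (hb : 0 < b) (hL : 0 < L) (ζ : ℝ → ℝ) (hζ : ContDiff ℝ (⊤ : ℕ∞) ζ)
    (hζ0 : ζ 0 = 0) (hζL : ζ L = 0)
    (hslope : ∀ s ∈ Set.Icc (0:ℝ) L, 0 < 1 - 2 * (deriv ζ s) ^ 2)
    (hrange : ∀ s ∈ Set.Ioo (0:ℝ) L, 0 < ζ s ∧ ζ s < b)
    (hconc : ∀ s ∈ Set.Ioo (0:ℝ) L, deriv (deriv ζ) s < 0)
    (lam mu : ℝ → ℝ)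
    (hlamc : ContinuousOn lam (Set.Icc 0 1)) (hmuc : ContinuousOn mu (Set.Icc 0 1))
    (hlam0 : lam 0 = 1) (hlam1 : lam 1 = 0) (hmu0 : mu 0 = 0) (hmu1 : mu 1 = 0)
    (hpos : ∀ t ∈ Set.Icc (0:ℝ) 1, ∀ s ∈ Set.Icc (0:ℝ) L,
      0 < 1 - (1 + lam t ^ 2) * (deriv ζ s) ^ 2) :
    ∃ t₁ ∈ Set.Ioo (0:ℝ) 1, lam t₁ = 1 / 2 ∧
      ∀ s ∈ Set.Ioo (0:ℝ) L,
        (creaseL ζ (lam t₁) (mu t₁) s + ζ s • xiL (lam t₁)) 2 < 0 := by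
  obtain ⟨t₁, ht₁, hval⟩ : ∃ t ∈ Set.Icc (0:ℝ) 1, lam t = 1/2 := by
    have h := intermediate_value_Icc' (by norm_num : (0:ℝ) ≤ 1) hlamc
    have : (1/2 : ℝ) ∈ Set.Icc (lam 1) (lam 0) := by
      rw [hlam0, hlam1]; constructor <;> norm_num
    obtain ⟨t, ht, hv⟩ := h this
    exact ⟨t, ht, hv⟩
  have ht0 : t₁ ≠ 0 := by intro h; rw [h, hlam0] at hval; norm_num at hval
  have ht1 : t₁ ≠ 1 := by intro h; rw [h, hlam1] at hval; norm_num at hval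
  refine ⟨t₁, ⟨lt_of_le_of_ne ht₁.1 (Ne.symm ht0), lt_of_le_of_ne ht₁.2 ht1⟩, hval, ?_⟩
  intro s hs
  have hz : 0 < ζ s := (hrange s hs).1
  have : (creaseL ζ (lam t₁) (mu t₁) s + ζ s • xiL (lam t₁)) 2
      = lam t₁ * ζ s + ζ s * ((1 + lam t₁ ^ 2)⁻¹ * (-(2 * lam t₁))) := by
    simp [creaseL, xiL, v3, PiLp.add_apply, PiLp.smul_apply]
  rw [this, hval]
  nlinarith
end
end
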